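/- For all n ≥ 1, the number of permutations of [n] avoiding both patterns 132 and 2341 equals the Fibonacci number F_{2n−1}. -/

import Mathlib

/-!
In a permutation avoiding 132, every entry to the left of the maximum `N` exceeds every entry
to its right. If the maximum is not in the last position, avoiding 2341 (with the last entry
playing the `1`) forces the entries left of it to decrease, so the permutation is
`N-1, …, N-p, N, σ` with `σ` any avoider of length `N - p`; counting the entries above and below
each prefix entry pins down its value. If the maximum is last, the permutation is `σ, N` with
`σ` any avoider of length `N`. Hence `a (N+1) = a N + ∑_{k=1}^{N} a k`, the recurrence of the
odd-indexed Fibonacci numbers.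
-/

/-- A word `π` contains the pattern `τ` if some subsequence of `π` is
order-isomorphic to `τ`. -/
def containsPat {n k : ℕ} (π : Fin n → Fin n) (τ : Fin k → Fin k) : Prop :=
  ∃ f : Fin k → Fin n, StrictMono f ∧ ∀ i j : Fin k, τ i < τ j ↔ π (f i) < π (f j)

/-- `π` avoids the pattern `τ`. -/
def avoidsPat {n k : ℕ} (π : Fin n → Fin n) (τ : Fin k → Fin k) : Prop :=
  ¬ containsPat π τ

open Finset Equiv

section Transfer

variable {m n k : ℕ} {π : Fin n → Fin n} {σ : Fin m → Fin m} {e : Fin m → Fin n}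
  {τ : Fin k → Fin k}

theorem containsPat.of_embedding (he : StrictMono e) (hσ : ∀ j, (π (e j) : ℕ) = σ j)
    (h : containsPat σ τ) : containsPat π τ := by
  obtain ⟨f, hf, hτ⟩ := h
  refine ⟨e ∘ f, he.comp hf, fun i j => ?_⟩
  simp only [hτ, Fin.lt_def, Function.comp_apply, hσ]

theorem avoidsPat.of_embedding (he : StrictMono e) (hσ : ∀ j, (π (e j) : ℕ) = σ j) :
    avoidsPat π τ → avoidsPat σ τ :=
  mt (containsPat.of_embedding he hσ)

theorem containsPat.of_range (he : StrictMono e) (hσ : ∀ j, (π (e j) : ℕ) = σ j)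
    {f : Fin k → Fin n} (hf : StrictMono f) (hτ : ∀ i j, τ i < τ j ↔ π (f i) < π (f j))
    (hr : ∀ i, f i ∈ Set.range e) : containsPat σ τ := by
  choose g hg using hr
  refine ⟨g, fun i j hij => he.lt_iff_lt.mp ?_, fun i j => ?_⟩
  · simpa only [hg] using hf hij
  · rw [hτ, ← hg i, ← hg j, Fin.lt_def, Fin.lt_def, hσ, hσ]

end Transfer

theorem containsPat_021 {n : ℕ} {π : Fin n → Fin n} {a b c : Fin n} (hab : a < b) (hbc : b < c)
    (h₁ : π a < π c) (h₂ : π c < π b) : containsPat π ![0,2,1] := by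
  refine ⟨![a, b, c], ?_, fun i j => ?_⟩
  · simp [Fin.strictMono_iff_lt_succ, Fin.forall_fin_succ, hab, hbc]
  · fin_cases i <;> fin_cases j <;> simp <;> order

theorem containsPat_1230 {n : ℕ} {π : Fin n → Fin n} {a b c d : Fin n} (hab : a < b)
    (hbc : b < c) (hcd : c < d) (h₁ : π d < π a) (h₂ : π a < π b) (h₃ : π b < π c) :
    containsPat π ![1,2,3,0] := by
  refine ⟨![a, b, c, d], ?_, fun i j => ?_⟩
  · simp [Fin.strictMono_iff_lt_succ, Fin.forall_fin_succ, hab, hbc, hcd]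
  · fin_cases i <;> fin_cases j <;> simp <;> order

noncomputable def restrictPerm {m n : ℕ} (π : Perm (Fin n)) {e : Fin m → Fin n}
    (he : Function.Injective e) (hb : ∀ j, (π (e j) : ℕ) < m) : Perm (Fin m) :=
  Equiv.ofBijective (fun j => ⟨π (e j), hb j⟩) <| Finite.injective_iff_bijective.mp
    fun _ _ h => he (π.injective (Fin.ext (Fin.mk.inj h)))

@[simp]
theorem restrictPerm_apply_val {m n : ℕ} (π : Perm (Fin n)) {e : Fin m → Fin n}
    (he : Function.Injective e) (hb : ∀ j, (π (e j) : ℕ) < m) (j : Fin m) :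
    (restrictPerm π he hb j : ℕ) = π (e j) :=
  rfl

open Classical in
noncomputable def av (n : ℕ) : Finset (Perm (Fin n)) :=
  {π | avoidsPat π ![0,2,1] ∧ avoidsPat π ![1,2,3,0]}

theorem mem_av {n : ℕ} {π : Perm (Fin n)} :
    π ∈ av n ↔ avoidsPat π ![0,2,1] ∧ avoidsPat π ![1,2,3,0] := by
  simp [av]

theorem card_eq_card_av_of_restrict {m n : ℕ} {F : Finset (Perm (Fin n))} (hF : F ⊆ av n)
    {e : Fin m → Fin n} (he : StrictMono e) (hb : ∀ π ∈ F, ∀ j, (π (e j) : ℕ) < m)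
    (hext : ∀ π ∈ F, ∀ π' ∈ F, (∀ j, π (e j) = π' (e j)) → π = π')
    (hlift : ∀ σ ∈ av m, ∃ π ∈ F, ∀ j, (π (e j) : ℕ) = σ j) : #F = #(av m) := by
  refine card_bij (fun π hπ => restrictPerm π he.injective (hb π hπ)) (fun π hπ => ?_)
    (fun π hπ π' hπ' h => hext π hπ π' hπ' fun j => ?_) (fun σ hσ => ?_)
  · obtain ⟨h021, h1230⟩ := mem_av.mp (hF hπ)
    exact mem_av.mpr ⟨h021.of_embedding he (fun _ => rfl), h1230.of_embedding he (fun _ => rfl)⟩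
  · exact Fin.ext (by simpa using congrArg (fun σ : Perm (Fin m) => (σ j : ℕ)) h)
  · obtain ⟨π, hπ, hσ⟩ := hlift σ hσ
    exact ⟨π, hπ, Equiv.ext fun j => Fin.ext (hσ j)⟩

section Counting

variable {α : Type*} {n : ℕ} {f : α → Fin n} {s : Finset α} {x : Fin n}

theorem card_le_of_forall_apply_lt (hf : Function.Injective f) (h : ∀ a ∈ s, f a < x) :
    #s ≤ x := by
  simpa using card_le_card_of_injOn f (fun a ha => mem_Iio.mpr (h a ha)) hf.injOn

theorem card_le_of_forall_lt_apply (hf : Function.Injective f) (h : ∀ a ∈ s, x < f a) :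
    #s ≤ n - 1 - x := by
  simpa using card_le_card_of_injOn f (fun a ha => mem_Ioi.mpr (h a ha)) hf.injOn

end Counting

section MaxPosition

variable {N : ℕ} {π : Perm (Fin (N + 1))} {p : Fin (N + 1)}

theorem apply_lt_last_of_ne (hp : π p = Fin.last N) {i : Fin (N + 1)} (hi : i ≠ p) :
    π i < Fin.last N :=
  (Fin.le_last _).lt_of_ne fun h => hi (π.injective (h.trans hp.symm))

theorem apply_lt_of_le_of_lt (h021 : avoidsPat π ![0,2,1]) (hp : π p = Fin.last N)
    {i j : Fin (N + 1)} (hi : i ≤ p) (hj : p < j) : π j < π i := by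
  have hjp : π j < π p := hp ▸ apply_lt_last_of_ne hp hj.ne'
  rcases hi.lt_or_eq with hi | rfl
  · by_contra! h
    exact h021 (containsPat_021 hi hj (h.lt_of_ne (π.injective.ne (hi.trans hj).ne)) hjp)
  · exact hjp

theorem apply_lt_of_lt_of_lt (h021 : avoidsPat π ![0,2,1]) (h1230 : avoidsPat π ![1,2,3,0])
    (hp : π p = Fin.last N) (hpN : p < Fin.last N) {i j : Fin (N + 1)} (hij : i < j)
    (hj : j < p) : π j < π i := by
  by_contra! h
  exact h1230 (containsPat_1230 hij hj hpN (apply_lt_of_le_of_lt h021 hp (hij.trans hj).le hpN)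
    (h.lt_of_ne (π.injective.ne hij.ne)) (hp ▸ apply_lt_last_of_ne hp hj.ne))

theorem apply_lt_sub_of_lt (h021 : avoidsPat π ![0,2,1]) (hp : π p = Fin.last N)
    {j : Fin (N + 1)} (hj : p < j) : (π j : ℕ) < N - p := by
  have := card_le_of_forall_lt_apply π.injective (s := Iic p) (x := π j) fun i hi =>
    apply_lt_of_le_of_lt h021 hp (mem_Iic.mp hi) hj
  simp only [Fin.card_Iic] at this
  omega

theorem apply_eq_of_lt (h021 : avoidsPat π ![0,2,1]) (h1230 : avoidsPat π ![1,2,3,0])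
    (hp : π p = Fin.last N) (hpN : p < Fin.last N) {i : Fin (N + 1)} (hi : i < p) :
    (π i : ℕ) = N - 1 - i := by
  have above : ∀ j ∈ insert p (Iio i), π i < π j := by
    intro j hj
    rcases mem_insert.mp hj with rfl | hj
    · exact hp ▸ apply_lt_last_of_ne hp hi.ne
    · exact apply_lt_of_lt_of_lt h021 h1230 hp hpN (mem_Iio.mp hj) hi
  have below : ∀ j ∈ (Ioi i).erase p, π j < π i := by
    intro j hj
    obtain ⟨hjp, hij⟩ := mem_erase.mp hj
    rcases lt_or_gt_of_ne hjp with hjp | hjp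
    · exact apply_lt_of_lt_of_lt h021 h1230 hp hpN (mem_Ioi.mp hij) hjp
    · exact apply_lt_of_le_of_lt h021 hp hi.le hjp
  have hle := card_le_of_forall_lt_apply π.injective above
  have hge := card_le_of_forall_apply_lt π.injective below
  rw [card_insert_of_notMem (by simpa using hi.le), Fin.card_Iio] at hle
  rw [card_erase_of_mem (mem_Ioi.mpr hi), Fin.card_Ioi] at hge
  omega

end MaxPosition

section Constructions

variable {N : ℕ} (p : Fin (N + 1))

def suffixPos (j : Fin (N - p)) : Fin (N + 1) :=
  ⟨p + 1 + j, by omega⟩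

theorem suffixPos_strictMono : StrictMono (suffixPos p) :=
  fun _ _ h => Fin.mk_lt_mk.mpr (by simpa using h)

theorem lt_suffixPos (j : Fin (N - p)) : p < suffixPos p j :=
  Fin.mk_lt_mk.mpr (by omega)

theorem mem_range_suffixPos {i : Fin (N + 1)} (hi : p < i) : i ∈ Set.range (suffixPos p) :=
  ⟨⟨i - (p + 1), by omega⟩, Fin.ext (by simp [suffixPos]; omega)⟩

def decreasingPrefixFun (σ : Perm (Fin (N - p))) (i : Fin (N + 1)) : Fin (N + 1) :=
  if h : p < i then Fin.castLE (by omega) (σ ⟨i - (p + 1), by omega⟩)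
  else if i = p then Fin.last N else ⟨N - 1 - i, by omega⟩

variable {p} (σ : Perm (Fin (N - p)))

theorem decreasingPrefixFun_suffixPos (j : Fin (N - p)) :
    (decreasingPrefixFun p σ (suffixPos p j) : ℕ) = σ j := by
  rw [decreasingPrefixFun, dif_pos (lt_suffixPos p j)]
  simp [suffixPos]

theorem decreasingPrefixFun_of_le {i : Fin (N + 1)} (hi : i ≤ p) :
    (decreasingPrefixFun p σ i : ℕ) = if i = p then N else N - 1 - i := by
  simp only [decreasingPrefixFun, dif_neg hi.not_gt]
  split_ifs <;> rfl

theorem decreasingPrefixFun_self : decreasingPrefixFun p σ p = Fin.last N :=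
  Fin.ext (by simp [decreasingPrefixFun_of_le])

theorem decreasingPrefixFun_lt {i : Fin (N + 1)} (hi : p < i) :
    (decreasingPrefixFun p σ i : ℕ) < N - p := by
  obtain ⟨j, rfl⟩ := mem_range_suffixPos p hi
  simp [decreasingPrefixFun_suffixPos]

theorem sub_le_decreasingPrefixFun {i : Fin (N + 1)} (hi : i ≤ p) :
    N - p ≤ (decreasingPrefixFun p σ i : ℕ) := by
  rw [decreasingPrefixFun_of_le σ hi]
  split_ifs <;> omega

theorem decreasingPrefixFun_injective : Function.Injective (decreasingPrefixFun p σ) := by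
  intro i j h
  rcases le_or_gt i p with hi | hi <;> rcases le_or_gt j p with hj | hj
  · have := congrArg Fin.val h
    rw [decreasingPrefixFun_of_le σ hi, decreasingPrefixFun_of_le σ hj] at this
    split_ifs at this <;> omega
  · exact absurd (decreasingPrefixFun_lt σ hj) (h ▸ sub_le_decreasingPrefixFun σ hi).not_gt
  · exact absurd (decreasingPrefixFun_lt σ hi) (h ▸ sub_le_decreasingPrefixFun σ hj).not_gt
  · obtain ⟨a, rfl⟩ := mem_range_suffixPos p hi
    obtain ⟨b, rfl⟩ := mem_range_suffixPos p hj
    have := congrArg Fin.val h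
    rw [decreasingPrefixFun_suffixPos, decreasingPrefixFun_suffixPos] at this
    rw [σ.injective (Fin.ext this)]

theorem lt_of_decreasingPrefixFun_lt {a b : Fin (N + 1)} (hab : a < b)
    (h : decreasingPrefixFun p σ a < decreasingPrefixFun p σ b) (hb : b ≠ p) : p < a := by
  by_contra! ha
  rw [Fin.lt_def] at h
  rcases le_or_gt b p with hbp | hbp
  · rw [decreasingPrefixFun_of_le σ ha, decreasingPrefixFun_of_le σ hbp] at h
    split_ifs at h <;> omega
  · have := sub_le_decreasingPrefixFun σ ha
    have := decreasingPrefixFun_lt σ hbp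
    omega

variable (p) in
noncomputable def decreasingPrefixPerm : Perm (Fin (N + 1)) :=
  Equiv.ofBijective _ (Finite.injective_iff_bijective.mp (decreasingPrefixFun_injective σ))

theorem decreasingPrefixPerm_apply (i : Fin (N + 1)) :
    decreasingPrefixPerm p σ i = decreasingPrefixFun p σ i :=
  rfl

theorem avoidsPat_decreasingPrefixPerm {k : ℕ} {τ : Fin (k + 1) → Fin (k + 1)}
    {b c : Fin (k + 1)} (hb : τ 0 < τ b) (hc : τ b < τ c) (hσ : avoidsPat σ τ) :
    avoidsPat (decreasingPrefixPerm p σ) τ := by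
  rintro ⟨f, hf, hτ⟩
  have hb₀ : 0 < b := Fin.pos_iff_ne_zero.mpr (by rintro rfl; exact hb.false)
  have hfb : f b ≠ p := fun h => by
    have := (hτ b c).mp hc
    rw [h, decreasingPrefixPerm_apply, decreasingPrefixFun_self] at this
    exact this.not_ge (Fin.le_last _)
  have hp : p < f 0 := lt_of_decreasingPrefixFun_lt σ (hf hb₀) ((hτ 0 b).mp hb) hfb
  exact hσ <| containsPat.of_range (suffixPos_strictMono p) (decreasingPrefixFun_suffixPos σ)
    hf hτ fun i => mem_range_suffixPos p (hp.trans_le (hf.monotone (Fin.zero_le i)))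

end Constructions

theorem avoidsPat_viaFintypeEmbedding_castSucc {N k : ℕ} {σ : Perm (Fin N)}
    {τ : Fin (k + 1) → Fin (k + 1)} {c : Fin (k + 1)} (hc : τ (Fin.last k) < τ c)
    (hσ : avoidsPat σ τ) : avoidsPat (σ.viaFintypeEmbedding Fin.castSuccEmb) τ := by
  rintro ⟨f, hf, hτ⟩
  have hlast : f (Fin.last k) < Fin.last N := by
    refine (Fin.le_last _).lt_of_ne fun h => ?_
    have := (hτ _ c).mp hc
    rw [h, Perm.viaFintypeEmbedding_apply_notMem_range _ _ (by simp)] at this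
    exact this.not_ge (Fin.le_last _)
  refine hσ <| containsPat.of_range Fin.strictMono_castSucc
    (fun j => congrArg Fin.val (Perm.viaFintypeEmbedding_apply_image σ Fin.castSuccEmb j)) hf hτ
    fun i => Fin.exists_castSucc_eq.mpr ((hf.monotone (Fin.le_last i)).trans_lt hlast).ne

theorem card_filter_apply_last_eq_last (N : ℕ) :
    #{π ∈ av (N + 1) | π (Fin.last N) = Fin.last N} = #(av N) := by
  refine card_eq_card_av_of_restrict (filter_subset _ _) Fin.strictMono_castSucc
    (fun π hπ j => ?_) (fun π hπ π' hπ' h => ?_) (fun σ hσ => ?_)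
  · exact apply_lt_last_of_ne (mem_filter.mp hπ).2 (Fin.castSucc_ne_last j)
  · refine Equiv.ext fun i => ?_
    induction i using Fin.lastCases with
    | last => exact (mem_filter.mp hπ).2.trans (mem_filter.mp hπ').2.symm
    | cast j => exact h j
  · obtain ⟨h021, h1230⟩ := mem_av.mp hσ
    refine ⟨σ.viaFintypeEmbedding Fin.castSuccEmb, mem_filter.mpr ⟨mem_av.mpr
      ⟨avoidsPat_viaFintypeEmbedding_castSucc (c := 1) (by decide) h021,
       avoidsPat_viaFintypeEmbedding_castSucc (c := 0) (by decide) h1230⟩,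
      Perm.viaFintypeEmbedding_apply_notMem_range _ _ (by simp)⟩, fun j => ?_⟩
    exact congrArg Fin.val (Perm.viaFintypeEmbedding_apply_image σ Fin.castSuccEmb j)

theorem card_filter_apply_eq_last_of_lt {N : ℕ} {p : Fin (N + 1)} (hpN : p < Fin.last N) :
    #{π ∈ av (N + 1) | π p = Fin.last N} = #(av (N - p)) := by
  refine card_eq_card_av_of_restrict (filter_subset _ _) (suffixPos_strictMono p)
    (fun π hπ j => ?_) (fun π hπ π' hπ' h => ?_) (fun σ hσ => ?_)
  · obtain ⟨hπ, hp⟩ := mem_filter.mp hπ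
    exact apply_lt_sub_of_lt (mem_av.mp hπ).1 hp (lt_suffixPos p j)
  · obtain ⟨hπ, hp⟩ := mem_filter.mp hπ
    obtain ⟨hπ', hp'⟩ := mem_filter.mp hπ'
    refine Equiv.ext fun i => ?_
    rcases lt_trichotomy i p with hi | rfl | hi
    · exact Fin.ext ((apply_eq_of_lt (mem_av.mp hπ).1 (mem_av.mp hπ).2 hp hpN hi).trans
        (apply_eq_of_lt (mem_av.mp hπ').1 (mem_av.mp hπ').2 hp' hpN hi).symm)
    · exact hp.trans hp'.symm
    · obtain ⟨j, rfl⟩ := mem_range_suffixPos p hi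
      exact h j
  · obtain ⟨h021, h1230⟩ := mem_av.mp hσ
    refine ⟨decreasingPrefixPerm p σ, mem_filter.mpr ⟨mem_av.mpr
      ⟨avoidsPat_decreasingPrefixPerm σ (b := 2) (c := 1) (by decide) (by decide) h021,
       avoidsPat_decreasingPrefixPerm σ (b := 1) (c := 2) (by decide) (by decide) h1230⟩,
      decreasingPrefixFun_self σ⟩, decreasingPrefixFun_suffixPos σ⟩

theorem card_av_zero : #(av 0) = 1 := by
  rw [eq_univ_of_forall fun π =>
    mem_av.mpr ⟨fun ⟨f, _⟩ => (f 0).elim0, fun ⟨f, _⟩ => (f 0).elim0⟩]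
  rfl

theorem card_av_succ (N : ℕ) : #(av (N + 1)) = #(av N) + ∑ k ∈ range N, #(av (k + 1)) := by
  rw [card_eq_sum_card_fiberwise (f := fun π : Perm (Fin (N + 1)) => π.symm (Fin.last N))
    (t := univ) fun _ _ => mem_univ _, Fin.sum_univ_castSucc, add_comm]
  simp_rw [Equiv.symm_apply_eq, eq_comm (a := Fin.last N), card_filter_apply_last_eq_last,
    card_filter_apply_eq_last_of_lt (Fin.castSucc_lt_last _), Fin.val_castSucc]
  rw [Fin.sum_univ_eq_sum_range (fun i => #(av (N - i))), ← sum_range_reflect]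
  refine congrArg _ (sum_congr rfl fun k hk => ?_)
  rw [show N - (N - 1 - k) = k + 1 by have := mem_range.mp hk; omega]

theorem sum_range_fib_two_mul_add_one (n : ℕ) :
    ∑ k ∈ range n, Nat.fib (2 * k + 1) = Nat.fib (2 * n) := by
  induction n with
  | zero => rfl
  | succ n ih => rw [sum_range_succ, ih, Nat.mul_succ, Nat.fib_add_two]

theorem card_av_succ_eq_fib (N : ℕ) : #(av (N + 1)) = Nat.fib (2 * N + 1) := by
  induction N using Nat.strong_induction_on with
  | _ N ih =>
    rcases N with _ | N
    · rw [card_av_succ, card_av_zero]; rfl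
    · rw [card_av_succ, ih N N.lt_succ_self, sum_congr rfl fun k hk => ih k (mem_range.mp hk),
        sum_range_fib_two_mul_add_one, show 2 * (N + 1) = 2 * N + 1 + 1 by ring,
        ← Nat.fib_add_two]

/-- The number of permutations of [n] avoiding 132 and 2341 (0-indexed: 021 and 1230)
equals the Fibonacci number F_{2n-1}. -/
theorem stmt2 (n : ℕ) (hn : 1 ≤ n) :
    Nat.card {π : Equiv.Perm (Fin n) //
      avoidsPat (⇑π) ![0,2,1] ∧ avoidsPat (⇑π) ![1,2,3,0]} = Nat.fib (2 * n - 1) := by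
  obtain ⟨N, rfl⟩ := Nat.exists_eq_add_of_le' hn
  simp_rw [← mem_av]
  rw [Nat.card_eq_finsetCard, card_av_succ_eq_fib, show 2 * (N + 1) - 1 = 2 * N + 1 by omega]
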